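/- Near-Eulerian criterion for posets: Let P be a lower Eulerian poset of rank n. Then P is near-Eulerian if and only if n > 0 and there exists a graded lower order ideal I of P of rank n−1 such that: (1) for every x ∈ I one has Σ_{y ∈ I ∩ [x,∞)} (−1)^{ρ(y)} = (−1)^{n+1} and Σ_{y ∈ [x,∞)} (−1)^{ρ(y)} = 0; and (2) for every x ∉ I one has Σ_{y ∈ [x,∞)} (−1)^{ρ(y)} = (−1)^{n}. Moreover, if these conditions hold for I, then I = ∂P. -/

import Mathlib

/-!
If `P ≅ Q ∖ {q, 1̂}` with `Q` Eulerian, every interval of `Q` is an interval of `P` or one of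
`[x, q]`, `[x, 1̂]`, `[q, 1̂]`. Writing `I = {x | x < q}`, the alternating rank sums over the
last three kinds are the sums of conditions (1) and (2) shifted by the signs of `q` and `1̂`, so
`Q` is Eulerian exactly when `P` is lower Eulerian and (1), (2) hold; maximal chains of `Q`
through `q` are maximal chains of `I` followed by `q` and `1̂`, which makes `I` graded of rank
`n - 1`. Conversely, adjoining to `P` an element `q` above exactly `I` and then a top gives a
graded poset of rank `n + 1` that is Eulerian by the same computation.

For `x` of rank `n - 1` the sum over `[x, ∞)` is `(-1)^(n-1)` plus `(-1)^n` times the number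
of elements covering `x`, so (1) and (2) say that `x` has one cover if `x ∈ I` and two
otherwise. Since `I` is generated by its maximal elements, which have rank `n - 1`, `I = ∂P`.
-/

open scoped Classical

noncomputable section

namespace CDIndex

variable {α β : Type}

/-- The natural rank function of a graded poset: `rho x` is one less than the largest
cardinality of a chain contained in `Set.Iic x` (i.e. the length of a maximal chain of
the interval `[0̂, x]`). -/
def rho [PartialOrder α] (x : α) : ℕ :=
  sSup {k : ℕ | ∃ s : Finset α,
    IsChain (· ≤ ·) (s : Set α) ∧ (s : Set α) ⊆ Set.Iic x ∧ s.card = k + 1}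

/-- A subset `S` of a poset is graded of rank `n` if every maximal chain of `S`
has exactly `n + 1` elements (i.e. length `n`). -/
def IsGradedSetOfRank [PartialOrder α] (S : Set α) (n : ℕ) : Prop :=
  ∀ s : Finset α, (s : Set α) ⊆ S → IsChain (· ≤ ·) (s : Set α) →
    (∀ t : Finset α, (t : Set α) ⊆ S → IsChain (· ≤ ·) (t : Set α) → s ⊆ t → s = t) →
    s.card = n + 1

/-- A poset is graded of rank `n` if every maximal chain has length `n`. -/
def IsGradedOfRank (α : Type) [PartialOrder α] (n : ℕ) : Prop :=
  IsGradedSetOfRank (Set.univ : Set α) n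

/-- Every interval `[s, t]` with `s < t`, `s, t ∈ S`, has equally many elements of even
rank and of odd rank. -/
def BalancedIntervalsIn [PartialOrder α] (S : Set α) : Prop :=
  ∀ s ∈ S, ∀ t ∈ S, s < t →
    {y ∈ Set.Icc s t | Even (rho y)}.ncard = {y ∈ Set.Icc s t | Odd (rho y)}.ncard

/-- An Eulerian poset of rank `n`: a graded poset with `0̂` and `1̂` in which every
interval of positive length has equally many elements of each parity of rank. -/
def IsEulerianOfRank (α : Type) [PartialOrder α] (n : ℕ) : Prop :=
  (∃ b : α, ∀ z, b ≤ z) ∧ (∃ t : α, ∀ z, z ≤ t) ∧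
    IsGradedOfRank α n ∧ BalancedIntervalsIn (Set.univ : Set α)

/-- A lower Eulerian poset of rank `n`: a graded poset with `0̂` all of whose intervals
are Eulerian. -/
def IsLowerEulerianOfRank (α : Type) [PartialOrder α] (n : ℕ) : Prop :=
  (∃ b : α, ∀ z, b ≤ z) ∧ IsGradedOfRank α n ∧ BalancedIntervalsIn (Set.univ : Set α)

/-- A lower order ideal `S` (of a poset) which is lower Eulerian of rank `n`. -/
def IsLowerEulerianSetOfRank [PartialOrder α] (S : Set α) (n : ℕ) : Prop :=
  IsGradedSetOfRank S n ∧ BalancedIntervalsIn S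

/-- The boundary of (a lower order ideal `S` of) a graded poset of rank `n`: the lower
order ideal generated by the rank `n - 1` elements which are covered by exactly one
element. -/
def boundaryIn [PartialOrder α] (S : Set α) (n : ℕ) : Set α :=
  {y | y ∈ S ∧ ∃ x ∈ S, rho x = n - 1 ∧ {z ∈ S | x ⋖ z}.ncard = 1 ∧ y ≤ x}

/-- The boundary `∂P` of a graded poset of rank `n`. -/
def boundary (α : Type) [PartialOrder α] (n : ℕ) : Set α :=
  boundaryIn (Set.univ : Set α) n

/-- `α` is a near-Eulerian poset of rank `n`: it is obtained from an Eulerian poset `Q`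
of rank `n + 1` by removing the maximal element and one element `q` of rank `n`. -/
def IsNearEulerianOfRank (α : Type) [PartialOrder α] [Finite α] (n : ℕ) : Prop :=
  ∃ (Q : Type) (_ : PartialOrder Q) (_ : Finite Q) (q top : Q),
    IsEulerianOfRank Q (n + 1) ∧ (∀ z, z ≤ top) ∧ rho q = n ∧ q ≠ top ∧
    Nonempty (α ≃o {x : Q // x ≠ q ∧ x ≠ top})

/-- `α` is (isomorphic to) the boundary of an Eulerian poset, where `α` has rank `n`
(so the Eulerian poset has rank `n + 1`). -/
def IsBoundaryOfEulerianOfRank (α : Type) [PartialOrder α] [Finite α] (n : ℕ) : Prop :=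
  ∃ (Q : Type) (_ : PartialOrder Q) (_ : Finite Q) (top : Q),
    IsEulerianOfRank Q (n + 1) ∧ (∀ z, z ≤ top) ∧
    Nonempty (α ≃o {x : Q // x ≠ top})
/-- The conditions on a graded lower order ideal `I` of rank `n - 1` appearing in the
near-Eulerian criterion for posets. -/
def NearEulerianCrit (α : Type) [PartialOrder α] (n : ℕ) (I : Set α) : Prop :=
  IsLowerSet I ∧ IsGradedSetOfRank I (n - 1) ∧
  (∀ x ∈ I,
    (∑ᶠ y ∈ {y | y ∈ I ∧ x ≤ y}, ((-1 : ℤ) ^ rho y)) = (-1) ^ (n + 1) ∧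
    (∑ᶠ y ∈ Set.Ici x, ((-1 : ℤ) ^ rho y)) = 0) ∧
  (∀ x ∉ I, (∑ᶠ y ∈ Set.Ici x, ((-1 : ℤ) ^ rho y)) = (-1) ^ n)

section Chains

variable [PartialOrder α] {S T : Set α} {s : Finset α} {x : α} {m : ℕ}

def IsMaxChainIn (S : Set α) (s : Finset α) : Prop :=
  Maximal (fun t : Finset α => (t : Set α) ⊆ S ∧ IsChain (· ≤ ·) (t : Set α)) s

lemma isGradedSetOfRank_iff :
    IsGradedSetOfRank S m ↔ ∀ s, IsMaxChainIn S s → s.card = m + 1 := by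
  simp only [IsGradedSetOfRank, IsMaxChainIn, maximal_iff, and_imp]

lemma IsGradedSetOfRank.card_eq (hS : IsGradedSetOfRank S m) (hs : IsMaxChainIn S s) :
    s.card = m + 1 :=
  isGradedSetOfRank_iff.mp hS s hs

lemma IsMaxChainIn.subset (hs : IsMaxChainIn S s) : (s : Set α) ⊆ S := hs.prop.1

lemma IsMaxChainIn.isChain (hs : IsMaxChainIn S s) : IsChain (· ≤ ·) (s : Set α) := hs.prop.2

lemma IsMaxChainIn.mem_of_forall (hs : IsMaxChainIn S s) (hx : x ∈ S)
    (hcomp : ∀ y ∈ s, x ≤ y ∨ y ≤ x) : x ∈ s := by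
  refine hs.eq_of_le (y := insert x s) ⟨?_, ?_⟩ (Finset.subset_insert x s) ▸
    Finset.mem_insert_self x s
  · simpa [Finset.coe_insert] using Set.insert_subset hx hs.subset
  · rw [Finset.coe_insert]
    exact hs.isChain.insert fun y hy _ => hcomp y hy

lemma IsMaxChainIn.of_subset (hs : IsMaxChainIn T s) (hsS : (s : Set α) ⊆ S) (hST : S ⊆ T) :
    IsMaxChainIn S s :=
  hs.mono (fun _ ht => ⟨ht.1.trans hST, ht.2⟩) ⟨hsS, hs.isChain⟩

lemma exists_isMaxChainIn_superset [Finite α] (hsS : (s : Set α) ⊆ S)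
    (hs : IsChain (· ≤ ·) (s : Set α)) : ∃ t, s ⊆ t ∧ IsMaxChainIn S t :=
  Finite.exists_le_maximal
    (p := fun t : Finset α => (t : Set α) ⊆ S ∧ IsChain (· ≤ ·) (t : Set α))
    ⟨hsS, hs⟩

lemma exists_isMaxChainIn [Finite α] (S : Set α) : ∃ t, IsMaxChainIn S t :=
  (exists_isMaxChainIn_superset (s := ∅) (by simp) (by simp)).imp fun _ h => h.2

lemma IsMaxChainIn.union (hx : x ∈ S) {e d : Finset α}
    (he : IsMaxChainIn {z ∈ S | z ≤ x} e) (hd : IsMaxChainIn {z ∈ S | x ≤ z} d) :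
    IsMaxChainIn S (e ∪ d) ∧ (e ∪ d).card + 1 = e.card + d.card := by
  have hxe : x ∈ e := he.mem_of_forall ⟨hx, le_rfl⟩ fun y hy => .inr (he.subset hy).2
  have hxd : x ∈ d := hd.mem_of_forall ⟨hx, le_rfl⟩ fun y hy => .inl (hd.subset hy).2
  have hed : ∀ a ∈ e, ∀ b ∈ d, a ≤ b := fun a ha b hb =>
    (he.subset ha).2.trans (hd.subset hb).2
  have hchain : IsChain (· ≤ ·) ((e ∪ d : Finset α) : Set α) := by
    rw [Finset.coe_union, isChain_union]
    exact ⟨he.isChain, hd.isChain, fun a ha b hb _ => .inl (hed a ha b hb)⟩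
  have hsub : ((e ∪ d : Finset α) : Set α) ⊆ S := by
    rw [Finset.coe_union]
    exact Set.union_subset (fun a ha => (he.subset ha).1) (fun a ha => (hd.subset ha).1)
  refine ⟨⟨⟨hsub, hchain⟩, fun t ht het z hz => ?_⟩, ?_⟩
  · have hcomp : ∀ w ∈ e ∪ d, z ≤ w ∨ w ≤ z := fun w hw =>
      (ht.2.total (het hw) hz).symm
    rcases hcomp x (Finset.mem_union_left _ hxe) with hzx | hxz
    · exact Finset.mem_union_left _ <| he.mem_of_forall ⟨ht.1 hz, hzx⟩
        fun w hw => hcomp w (Finset.mem_union_left _ hw)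
    · exact Finset.mem_union_right _ <| hd.mem_of_forall ⟨ht.1 hz, hxz⟩
        fun w hw => hcomp w (Finset.mem_union_right _ hw)
  · have hinter : e ∩ d = {x} := Finset.eq_singleton_iff_unique_mem.mpr
      ⟨Finset.mem_inter.mpr ⟨hxe, hxd⟩, fun z hz => le_antisymm
        (he.subset (Finset.mem_inter.mp hz).1).2 (hd.subset (Finset.mem_inter.mp hz).2).2⟩
    simpa [hinter] using Finset.card_union_add_card_inter e d

lemma isMaxChainIn_Iic_iff :
    IsMaxChainIn (Set.Iic x) s ↔ x ∈ s ∧ IsMaxChainIn (Set.Iio x) (s.erase x) := by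
  have hins : ∀ t : Finset α, (t : Set α) ⊆ Set.Iio x → IsChain (· ≤ ·) (t : Set α) →
      ((insert x t : Finset α) : Set α) ⊆ Set.Iic x ∧
        IsChain (· ≤ ·) ((insert x t : Finset α) : Set α) := fun t ht htc => by
    rw [Finset.coe_insert]
    exact ⟨Set.insert_subset le_rfl fun z hz => (ht hz).le,
      htc.insert fun z hz _ => .inr (ht hz).le⟩
  constructor
  · intro hs
    have hxs : x ∈ s := hs.mem_of_forall le_rfl fun y hy => .inr (hs.subset hy)
    refine ⟨hxs, ⟨⟨fun z hz => ?_,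
      hs.isChain.mono (Finset.coe_subset.mpr (s.erase_subset x))⟩, fun t ht hst z hz => ?_⟩⟩
    · obtain ⟨hzx, hz⟩ := Finset.mem_erase.mp hz
      exact lt_of_le_of_ne (hs.subset hz) hzx
    · have hsub : s ⊆ insert x t := fun w hw => by
        by_cases hwx : w = x
        · exact hwx ▸ Finset.mem_insert_self x t
        · exact Finset.mem_insert_of_mem (hst (Finset.mem_erase.mpr ⟨hwx, hw⟩))
      have hzs := hs.le_of_ge (hins t ht.1 ht.2) hsub (Finset.mem_insert_of_mem hz)
      exact Finset.mem_erase.mpr ⟨(ht.1 hz).ne, hzs⟩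
  · rintro ⟨hxs, hs⟩
    have hs_eq : insert x (s.erase x) = s := Finset.insert_erase hxs
    have hP := hins _ hs.subset hs.isChain
    rw [hs_eq] at hP
    refine ⟨hP, fun t ht hst z hz => ?_⟩
    by_cases hzx : z = x
    · exact hzx ▸ hxs
    · have hsub : s.erase x ⊆ t.erase x := Finset.erase_subset_erase x hst
      have hPt : ((t.erase x : Finset α) : Set α) ⊆ Set.Iio x ∧
          IsChain (· ≤ ·) ((t.erase x : Finset α) : Set α) :=
        ⟨fun w hw => lt_of_le_of_ne (ht.1 (Finset.mem_of_mem_erase hw))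
          (Finset.ne_of_mem_erase hw), ht.2.mono (Finset.coe_subset.mpr (t.erase_subset x))⟩
      exact Finset.mem_of_mem_erase (hs.le_of_ge hPt hsub (Finset.mem_erase.mpr ⟨hzx, hz⟩))

end Chains

section Rank

variable [PartialOrder α] [Finite α] {S : Set α} {e : Finset α} {x y : α} {m c : ℕ}

lemma rho_add_one_eq_of_forall_card (h : ∀ e, IsMaxChainIn (Set.Iic x) e → e.card = c) :
    rho x + 1 = c := by
  have := Fintype.ofFinite α
  set K := {k : ℕ | ∃ s : Finset α,
    IsChain (· ≤ ·) (s : Set α) ∧ (s : Set α) ⊆ Set.Iic x ∧ s.card = k + 1}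
  have hbdd : BddAbove K :=
    ⟨Fintype.card α, fun k ⟨s, _, _, hk⟩ => by have := s.card_le_univ; omega⟩
  obtain ⟨e, he⟩ := exists_isMaxChainIn (Set.Iic x)
  have hxe : x ∈ e := he.mem_of_forall le_rfl fun y hy => .inr (he.subset hy)
  have hcK : c - 1 ∈ K := ⟨e, he.isChain, he.subset, by
    have := Finset.card_pos.mpr ⟨x, hxe⟩
    rw [← h e he]; omega⟩
  obtain ⟨s, hs, hsx, hcard⟩ : rho x ∈ K := Nat.sSup_mem ⟨_, hcK⟩ hbdd
  obtain ⟨e', hse', he'⟩ := exists_isMaxChainIn_superset hsx hs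
  have h1 := Finset.card_le_card hse'
  have h2 : c - 1 ≤ rho x := le_csSup hbdd hcK
  rw [h e' he'] at h1
  omega

namespace IsGradedSetOfRank

lemma card_eq_rho_add_one (hS : IsGradedSetOfRank S m) (hlow : IsLowerSet S) (hx : x ∈ S)
    (he : IsMaxChainIn (Set.Iic x) e) : e.card = rho x + 1 := by
  have hIic : {z ∈ S | z ≤ x} = Set.Iic x :=
    Set.ext fun z => ⟨And.right, fun hz => ⟨hlow hz hx, hz⟩⟩
  obtain ⟨d, hd⟩ := exists_isMaxChainIn {z ∈ S | x ≤ z}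
  have key : ∀ e', IsMaxChainIn (Set.Iic x) e' → e'.card = m + 2 - d.card := fun e' he' => by
    obtain ⟨hmax, hcard⟩ := IsMaxChainIn.union hx (hIic ▸ he') hd
    have := hS.card_eq hmax
    omega
  rw [key e he, rho_add_one_eq_of_forall_card key]

lemma rho_lt_rho (hS : IsGradedSetOfRank S m) (hlow : IsLowerSet S) (hy : y ∈ S) (hxy : x < y) :
    rho x < rho y := by
  obtain ⟨e, he⟩ := exists_isMaxChainIn (Set.Iic x)
  have hsub : ((insert y e : Finset α) : Set α) ⊆ Set.Iic y := by
    rw [Finset.coe_insert]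
    exact Set.insert_subset le_rfl fun z hz => (he.subset hz).trans hxy.le
  have hchain : IsChain (· ≤ ·) ((insert y e : Finset α) : Set α) := by
    rw [Finset.coe_insert]
    exact he.isChain.insert fun z hz _ => .inr ((he.subset hz).trans hxy.le)
  obtain ⟨c, hec, hc⟩ := exists_isMaxChainIn_superset hsub hchain
  have hye : y ∉ e := fun hye => hxy.not_ge (he.subset hye)
  have := Finset.card_le_card hec
  rw [Finset.card_insert_of_notMem hye, hS.card_eq_rho_add_one hlow (hlow hxy.le hy) he,
    hS.card_eq_rho_add_one hlow hy hc] at this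
  omega

lemma rho_le (hS : IsGradedSetOfRank S m) (hlow : IsLowerSet S) (hx : x ∈ S) : rho x ≤ m := by
  obtain ⟨e, he⟩ := exists_isMaxChainIn (Set.Iic x)
  obtain ⟨t, het, ht⟩ :=
    exists_isMaxChainIn_superset (fun z hz => hlow (he.subset hz) hx) he.isChain
  have := Finset.card_le_card het
  rw [hS.card_eq_rho_add_one hlow hx he, hS.card_eq ht] at this
  omega

lemma rho_eq_of_maximal (hS : IsGradedSetOfRank S m) (hlow : IsLowerSet S)
    (hx : Maximal (· ∈ S) x) : rho x = m := by
  obtain ⟨e, he⟩ := exists_isMaxChainIn (Set.Iic x)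
  have hxe : x ∈ e := he.mem_of_forall le_rfl fun y hy => .inr (he.subset hy)
  have hmax : IsMaxChainIn S e := by
    refine ⟨⟨fun z hz => hlow (he.subset hz) hx.prop, he.isChain⟩, fun t ht het z hz => ?_⟩
    have hzx : z ≤ x := (ht.2.total hz (het hxe)).elim id (hx.le_of_ge (ht.1 hz))
    exact he.mem_of_forall hzx fun w hw => ht.2.total hz (het hw)
  have := hS.card_eq hmax
  rw [hS.card_eq_rho_add_one hlow hx.prop he] at this
  omega

lemma covBy_of_rho_le (hS : IsGradedSetOfRank S m) (hlow : IsLowerSet S) (hy : y ∈ S)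
    (hxy : x < y) (h : rho y ≤ rho x + 1) : x ⋖ y :=
  ⟨hxy, fun z hxz hzy => by
    have := hS.rho_lt_rho hlow (hlow hzy.le hy) hxz
    have := hS.rho_lt_rho hlow hy hzy
    omega⟩

end IsGradedSetOfRank

end Rank

section Image

variable [PartialOrder α] [PartialOrder β] (f : α ↪o β)

lemma rho_apply_eq_of_Iic_eq_image {a : α} (h : Set.Iic (f a) = f '' Set.Iic a) :
    rho (f a) = rho a := by
  unfold rho
  congr 1
  ext k
  constructor
  · rintro ⟨s, hs, hsa, hcard⟩
    rw [h] at hsa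
    obtain ⟨s', hs'a, rfl⟩ := Finset.subset_set_image_iff.mp hsa
    rw [Finset.coe_image, IsChain.image_relEmbedding_iff] at hs
    exact ⟨s', hs, hs'a, by rwa [Finset.card_image_of_injective _ f.injective] at hcard⟩
  · rintro ⟨s, hs, hsa, hcard⟩
    refine ⟨s.image f, ?_, ?_, by rwa [Finset.card_image_of_injective _ f.injective]⟩
    · rwa [Finset.coe_image, IsChain.image_relEmbedding_iff]
    · rw [Finset.coe_image, h]
      exact Set.image_mono hsa

lemma isMaxChainIn_image_iff {S : Set α} {u : Finset α} :
    IsMaxChainIn (f '' S) (u.image f) ↔ IsMaxChainIn S u := by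
  have hP : ∀ u : Finset α, (((u.image f : Finset β) : Set β) ⊆ f '' S ∧
      IsChain (· ≤ ·) ((u.image f : Finset β) : Set β)) ↔
      ((u : Set α) ⊆ S ∧ IsChain (· ≤ ·) (u : Set α)) := fun u => by
    rw [Finset.coe_image, Set.image_subset_image_iff f.injective, IsChain.image_relEmbedding_iff]
  constructor
  · intro h
    refine ⟨(hP u).1 h.prop, fun t ht hut => ?_⟩
    exact (Finset.image_subset_image_iff f.injective).1
      (h.le_of_ge ((hP t).2 ht) (Finset.image_subset_image hut))
  · intro h
    refine ⟨(hP u).2 h.prop, fun t ht hut => ?_⟩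
    obtain ⟨t, -, rfl⟩ := Finset.subset_set_image_iff.mp ht.1
    rw [Finset.image_subset_image_iff f.injective] at hut ⊢
    exact h.le_of_ge ((hP t).1 ht) hut

end Image

lemma finsum_mem_const_eq_ncard_mul {α : Type*} [Finite α] (A : Set α) (c : ℤ) :
    ∑ᶠ _ ∈ A, c = A.ncard * c := by
  rw [finsum_mem_eq_finite_toFinset_sum _ A.toFinite, Finset.sum_const, nsmul_eq_mul,
    Set.ncard_eq_toFinset_card A]

section SignSum

variable [PartialOrder α]

def signSum (A : Set α) : ℤ := ∑ᶠ y ∈ A, (-1 : ℤ) ^ rho y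

lemma signSum_eq_ncard_sub_ncard [Finite α] (A : Set α) :
    signSum A = ({y ∈ A | Even (rho y)}.ncard : ℤ) - {y ∈ A | Odd (rho y)}.ncard := by
  have hodd : {y ∈ A | Odd (rho y)} = A \ {y | Even (rho y)} := by
    ext y
    simp [Nat.not_even_iff_odd]
  rw [signSum, ← finsum_mem_inter_add_sdiff {y | Even (rho y)} A.toFinite, hodd,
    finsum_mem_congr rfl fun y hy => (hy.2 : Even (rho y)).neg_one_pow,
    finsum_mem_congr rfl fun y hy => (Nat.not_even_iff_odd.mp hy.2).neg_one_pow,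
    finsum_mem_const_eq_ncard_mul, finsum_mem_const_eq_ncard_mul]
  rw [mul_one, mul_neg_one, ← sub_eq_add_neg]
  rfl

lemma balancedIntervalsIn_iff [Finite α] {S : Set α} :
    BalancedIntervalsIn S ↔ ∀ s ∈ S, ∀ t ∈ S, s < t → signSum (Set.Icc s t) = 0 := by
  simp only [BalancedIntervalsIn, signSum_eq_ncard_sub_ncard, sub_eq_zero, Nat.cast_inj]

lemma signSum_inter_pair {a b : α} (hab : a ≠ b) (A : Set α) :
    signSum (A ∩ {a, b}) = (if a ∈ A then (-1 : ℤ) ^ rho a else 0) +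
      (if b ∈ A then (-1 : ℤ) ^ rho b else 0) := by
  rw [Set.inter_comm]
  split_ifs with ha hb hb <;>
    simp only [signSum, Set.insert_inter_of_mem, Set.insert_inter_of_notMem,
      Set.singleton_inter_of_mem, Set.singleton_inter_of_notMem, LawfulSingleton.insert_empty_eq,
      ha, hb, not_false_eq_true] <;>
    simp only [finsum_mem_pair hab, finsum_mem_singleton, finsum_mem_empty, add_zero, zero_add]

end SignSum

section Deletion

variable [PartialOrder α] {Q : Type} [PartialOrder Q]

structure IsCoatomTopDeletion (f : α ↪o Q) (q t : Q) : Prop where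
  range_eq : Set.range f = {z | z ≠ q ∧ z ≠ t}
  le_top : ∀ z, z ≤ t
  covBy : q ⋖ t

namespace IsCoatomTopDeletion

variable {f : α ↪o Q} {q t : Q} {n m : ℕ}

lemma apply_ne_left (hD : IsCoatomTopDeletion f q t) (a : α) : f a ≠ q :=
  (hD.range_eq ▸ Set.mem_range_self a : f a ∈ {z | z ≠ q ∧ z ≠ t}).1

lemma apply_ne_right (hD : IsCoatomTopDeletion f q t) (a : α) : f a ≠ t :=
  (hD.range_eq ▸ Set.mem_range_self a : f a ∈ {z | z ≠ q ∧ z ≠ t}).2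

lemma eq_or_exists (hD : IsCoatomTopDeletion f q t) (z : Q) :
    z = q ∨ z = t ∨ ∃ a, f a = z := by
  by_contra! h
  obtain ⟨a, ha⟩ : z ∈ Set.range f := hD.range_eq ▸ ⟨h.1, h.2.1⟩
  exact h.2.2 a ha

lemma eq_top_of_lt (hD : IsCoatomTopDeletion f q t) {z : Q} (h : q < z) : z = t := by
  by_contra hz
  exact hD.covBy.2 h (lt_of_le_of_ne (hD.le_top z) hz)

lemma not_left_le_apply (hD : IsCoatomTopDeletion f q t) (a : α) : ¬ q ≤ f a := fun h =>
  hD.apply_ne_right a (hD.eq_top_of_lt (lt_of_le_of_ne h (hD.apply_ne_left a).symm))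

lemma Iic_apply (hD : IsCoatomTopDeletion f q t) (a : α) :
    Set.Iic (f a) = f '' Set.Iic a := by
  ext z
  refine ⟨fun hz => ?_, fun ⟨b, hb, hbz⟩ => hbz ▸ f.monotone hb⟩
  rcases hD.eq_or_exists z with rfl | rfl | ⟨b, rfl⟩
  · exact absurd hz (hD.not_left_le_apply a)
  · exact absurd (le_antisymm (hD.le_top _) hz) (hD.apply_ne_right a)
  · exact ⟨b, f.le_iff_le.mp hz, rfl⟩

lemma rho_apply (hD : IsCoatomTopDeletion f q t) (a : α) : rho (f a) = rho a :=
  rho_apply_eq_of_Iic_eq_image f (hD.Iic_apply a)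

lemma Iio_left (hD : IsCoatomTopDeletion f q t) : Set.Iio q = f '' {a | f a ≤ q} := by
  ext z
  refine ⟨fun hz => ?_, fun ⟨a, ha, haz⟩ => haz ▸ lt_of_le_of_ne ha (hD.apply_ne_left a)⟩
  obtain ⟨a, rfl⟩ : z ∈ Set.range f :=
    hD.range_eq ▸ ⟨hz.ne, (hz.trans hD.covBy.lt).ne⟩
  exact ⟨a, hz.le, rfl⟩

lemma Iio_right (hD : IsCoatomTopDeletion f q t) : Set.Iio t = insert q (Set.range f) := by
  ext z
  rw [Set.mem_Iio, Set.mem_insert_iff, hD.range_eq, Set.mem_ofPred_eq, lt_iff_le_and_ne]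
  have := hD.le_top z
  have := hD.covBy.ne
  grind

lemma isGradedOfRank (hD : IsCoatomTopDeletion f q t) (hn : 0 < n) (hα : IsGradedOfRank α n)
    (hI : IsGradedSetOfRank {a | f a ≤ q} (n - 1)) : IsGradedOfRank Q (n + 1) := by
  refine isGradedSetOfRank_iff.mpr fun s hs => ?_
  have hIic : Set.Iic t = Set.univ := Set.eq_univ_of_forall hD.le_top
  obtain ⟨hts, hs⟩ := isMaxChainIn_Iic_iff.mp (hIic ▸ hs)
  rw [hD.Iio_right] at hs
  rw [← Finset.insert_erase hts, Finset.card_insert_of_notMem (Finset.notMem_erase t s)]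
  by_cases hqs : q ∈ s.erase t
  · have hle : ((s.erase t : Finset Q) : Set Q) ⊆ Set.Iic q := fun z hz => by
      rcases hs.isChain.total hz hqs with hzq | hqz
      · exact hzq
      rcases eq_or_lt_of_le hqz with rfl | hlt
      · exact le_rfl
      · exact absurd (hD.eq_top_of_lt hlt) (Finset.ne_of_mem_erase hz)
    have hIic_q : Set.Iic q ⊆ insert q (Set.range f) := by
      rw [← hD.Iio_right]
      exact fun z hz => lt_of_le_of_lt hz hD.covBy.lt
    obtain ⟨-, hs⟩ := isMaxChainIn_Iic_iff.mp (hs.of_subset hle hIic_q)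
    rw [hD.Iio_left] at hs
    obtain ⟨u, -, hu⟩ := Finset.subset_set_image_iff.mp hs.subset
    rw [← hu, isMaxChainIn_image_iff] at hs
    rw [← Finset.insert_erase hqs, Finset.card_insert_of_notMem (Finset.notMem_erase q _), ← hu,
      Finset.card_image_of_injective _ f.injective, hI.card_eq hs]
    omega
  · have hsub : ((s.erase t : Finset Q) : Set Q) ⊆ f '' Set.univ := fun z hz => by
      rw [Set.image_univ]
      exact (Set.mem_insert_iff.mp (hs.subset hz)).resolve_left fun h => hqs (h ▸ hz)
    have hs := hs.of_subset hsub (Set.image_univ ▸ Set.subset_insert _ _)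
    obtain ⟨u, -, hu⟩ := Finset.subset_set_image_iff.mp hsub
    rw [← hu, isMaxChainIn_image_iff] at hs
    rw [← hu, Finset.card_image_of_injective _ f.injective, hα.card_eq hs]

variable [Finite Q]

lemma card_eq_rho_of_isMaxChainIn (hD : IsCoatomTopDeletion f q t) (hQ : IsGradedOfRank Q m)
    {u : Finset α} (hu : IsMaxChainIn {a | f a ≤ q} u) : u.card = rho q := by
  have hqu : q ∉ u.image f := by simp [hD.apply_ne_left]
  have hmax : IsMaxChainIn (Set.Iic q) (insert q (u.image f)) := by
    refine isMaxChainIn_Iic_iff.mpr ⟨Finset.mem_insert_self q _, ?_⟩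
    rw [Finset.erase_insert hqu, hD.Iio_left, isMaxChainIn_image_iff]
    exact hu
  have := hQ.card_eq_rho_add_one isLowerSet_univ (Set.mem_univ q) hmax
  rw [Finset.card_insert_of_notMem hqu, Finset.card_image_of_injective _ f.injective] at this
  omega

lemma rho_right (hD : IsCoatomTopDeletion f q t) (hQ : IsGradedOfRank Q m) : rho t = m :=
  hQ.rho_eq_of_maximal isLowerSet_univ ⟨Set.mem_univ t, fun z _ _ => hD.le_top z⟩

lemma signSum_eq (hD : IsCoatomTopDeletion f q t) (A : Set Q) :
    signSum A = signSum (f ⁻¹' A) + (if q ∈ A then (-1 : ℤ) ^ rho q else 0) +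
      (if t ∈ A then (-1 : ℤ) ^ rho t else 0) := by
  have hcompl : A \ Set.range f = A ∩ {q, t} := by
    ext z
    rw [hD.range_eq]
    simp only [Set.mem_sdiff, Set.mem_ofPred_eq, Set.mem_inter_iff, Set.mem_insert_iff,
      Set.mem_singleton_iff]
    tauto
  rw [add_assoc, ← signSum_inter_pair hD.covBy.ne A, ← hcompl, signSum, signSum, signSum,
    ← finsum_mem_inter_add_sdiff (Set.range f) A.toFinite, ← Set.image_preimage_eq_inter_range,
    finsum_mem_image f.injective.injOn]
  simp only [hD.rho_apply]

lemma signSum_Icc_apply_apply (hD : IsCoatomTopDeletion f q t) (x y : α) :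
    signSum (Set.Icc (f x) (f y)) = signSum (Set.Icc x y) := by
  have hq : q ∉ Set.Icc (f x) (f y) := fun h => hD.not_left_le_apply y h.2
  have ht : t ∉ Set.Icc (f x) (f y) := fun h =>
    hD.apply_ne_right y (le_antisymm (hD.le_top _) h.2)
  rw [hD.signSum_eq, if_neg hq, if_neg ht, OrderEmbedding.preimage_Icc, add_zero, add_zero]

lemma signSum_Icc_apply_left (hD : IsCoatomTopDeletion f q t) (x : α) :
    signSum (Set.Icc (f x) q) = signSum {y | f y ≤ q ∧ x ≤ y} +
      (if f x ≤ q then (-1 : ℤ) ^ rho q else 0) := by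
  have ht : t ∉ Set.Icc (f x) q := fun h => hD.covBy.lt.not_ge h.2
  have hpre : f ⁻¹' Set.Icc (f x) q = {y | f y ≤ q ∧ x ≤ y} := by
    ext y
    simp [f.le_iff_le, and_comm]
  rw [hD.signSum_eq, hpre, if_neg ht, add_zero]
  simp only [Set.mem_Icc, le_refl, and_true]

lemma signSum_Icc_apply_top (hD : IsCoatomTopDeletion f q t) (x : α) :
    signSum (Set.Icc (f x) t) = signSum (Set.Ici x) +
      (if f x ≤ q then (-1 : ℤ) ^ rho q else 0) + (-1 : ℤ) ^ rho t := by
  have hpre : f ⁻¹' Set.Icc (f x) t = Set.Ici x := by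
    ext y
    simp [f.le_iff_le, hD.le_top]
  simp only [hD.signSum_eq, hpre, Set.mem_Icc, hD.le_top, and_true, if_true]

lemma signSum_Icc_left_top (hD : IsCoatomTopDeletion f q t) :
    signSum (Set.Icc q t) = (-1 : ℤ) ^ rho q + (-1 : ℤ) ^ rho t := by
  have hpre : f ⁻¹' Set.Icc q t = ∅ := by
    ext y
    simp [hD.not_left_le_apply]
  rw [hD.signSum_eq, hpre]
  simp [hD.le_top, signSum]

lemma balancedIntervalsIn_univ_iff (hD : IsCoatomTopDeletion f q t) (hq : rho q = n)
    (ht : rho t = n + 1) :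
    BalancedIntervalsIn (Set.univ : Set Q) ↔ BalancedIntervalsIn (Set.univ : Set α) ∧
      (∀ x ∈ {a | f a ≤ q}, signSum {y | f y ≤ q ∧ x ≤ y} = (-1) ^ (n + 1) ∧
        signSum (Set.Ici x) = 0) ∧
      (∀ x ∉ {a | f a ≤ q}, signSum (Set.Ici x) = (-1) ^ n) := by
  have : Finite α := Finite.of_injective f f.injective
  simp only [balancedIntervalsIn_iff, Set.mem_univ, true_implies, Set.mem_ofPred_eq]
  constructor
  · intro hQ
    refine ⟨fun x y hxy => ?_, fun x hx => ⟨?_, ?_⟩, fun x hx => ?_⟩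
    · rw [← hD.signSum_Icc_apply_apply]
      exact hQ _ _ (f.strictMono hxy)
    · have := hQ _ _ (lt_of_le_of_ne hx (hD.apply_ne_left x))
      rw [hD.signSum_Icc_apply_left, if_pos hx, hq] at this
      linear_combination this
    · have := hQ _ _ (lt_of_le_of_ne (hD.le_top _) (hD.apply_ne_right x))
      rw [hD.signSum_Icc_apply_top, if_pos hx, hq, ht] at this
      linear_combination this
    · have := hQ _ _ (lt_of_le_of_ne (hD.le_top _) (hD.apply_ne_right x))
      rw [hD.signSum_Icc_apply_top, if_neg hx, ht] at this
      linear_combination this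
  · rintro ⟨hα, hI, hnI⟩ s u hsu
    rcases hD.eq_or_exists s with rfl | rfl | ⟨x, rfl⟩
    · rw [hD.eq_top_of_lt hsu, hD.signSum_Icc_left_top, hq, ht]
      ring
    · exact absurd (hD.le_top u) hsu.not_ge
    rcases hD.eq_or_exists u with rfl | rfl | ⟨y, rfl⟩
    · rw [hD.signSum_Icc_apply_left, if_pos hsu.le, (hI x hsu.le).1, hq]
      ring
    · by_cases hx : f x ≤ q
      · rw [hD.signSum_Icc_apply_top, if_pos hx, (hI x hx).2, hq, ht]
        ring
      · rw [hD.signSum_Icc_apply_top, if_neg hx, hnI x hx, ht]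
        ring
    · rw [hD.signSum_Icc_apply_apply]
      exact hα x y (f.lt_iff_lt.mp hsu)

lemma nearEulerianCrit [Nonempty α] (hD : IsCoatomTopDeletion f q t)
    (hQ : IsEulerianOfRank Q (n + 1)) (hq : rho q = n) :
    0 < n ∧ NearEulerianCrit α n {a | f a ≤ q} := by
  obtain ⟨a⟩ := ‹Nonempty α›
  obtain ⟨⟨b, hb⟩, -, hQgr, hQbal⟩ := hQ
  have hn : 0 < n := by
    rcases eq_or_lt_of_le (hb q) with rfl | hbq
    · exact absurd (hb (f a)) (hD.not_left_le_apply a)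
    · have := hQgr.rho_lt_rho isLowerSet_univ (Set.mem_univ q) hbq
      omega
  obtain ⟨-, hI, hnI⟩ :=
    (hD.balancedIntervalsIn_univ_iff hq (hD.rho_right hQgr)).mp hQbal
  refine ⟨hn, fun x y hxy hy => (f.monotone hxy).trans hy,
    isGradedSetOfRank_iff.mpr fun u hu => ?_, hI, hnI⟩
  rw [hD.card_eq_rho_of_isMaxChainIn hQgr hu, hq]
  omega

end IsCoatomTopDeletion

lemma isNearEulerianOfRank_iff [Finite α] {n : ℕ} :
    IsNearEulerianOfRank α n ↔ ∃ (Q : Type) (_ : PartialOrder Q) (_ : Finite Q) (f : α ↪o Q)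
      (q t : Q), IsCoatomTopDeletion f q t ∧ IsEulerianOfRank Q (n + 1) ∧ rho q = n := by
  constructor
  · rintro ⟨Q, instQ, finQ, q, t, hQ, ht, hq, hqt, ⟨e⟩⟩
    refine ⟨Q, instQ, finQ, e.toOrderEmbedding.trans (OrderEmbedding.subtype _), q, t,
      ⟨?_, ht, ?_⟩, hQ, hq⟩
    · simp [Set.range_comp, e.surjective.range_eq]
    · have hQgr : IsGradedOfRank Q (n + 1) := hQ.2.2.1
      have : rho t = n + 1 :=
        hQgr.rho_eq_of_maximal isLowerSet_univ ⟨Set.mem_univ t, fun z _ _ => ht z⟩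
      exact hQgr.covBy_of_rho_le isLowerSet_univ (Set.mem_univ t) (lt_of_le_of_ne (ht q) hqt)
        (by omega)
  · rintro ⟨Q, instQ, finQ, f, q, t, hD, hQ, hq⟩
    exact ⟨Q, instQ, finQ, q, t, hQ, hD.le_top, hq, hD.covBy.ne,
      ⟨(OrderEmbedding.orderIso (f := f)).trans (OrderIso.setCongr _ _ hD.range_eq)⟩⟩

end Deletion

section WithTopOver

variable [PartialOrder α]

/-- `α` with one new element, `apex` (the value `none`), placed above exactly the elements
of `I`. -/
def WithTopOver (_I : LowerSet α) : Type := Option α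

namespace WithTopOver

variable {I : LowerSet α}

instance : PartialOrder (WithTopOver I) where
  le x y := match x, y with
    | some a, some b => a ≤ b
    | some a, none => a ∈ I
    | none, some _ => False
    | none, none => True
  le_refl x := by
    rcases x with _ | a
    exacts [trivial, le_refl a]
  le_trans x y z hxy hyz := by
    rcases x with _ | a <;> rcases y with _ | b <;> rcases z with _ | c <;>
      dsimp only at hxy hyz ⊢ <;>
      first | trivial | exact hxy | exact hyz.elim | exact hxy.elim | exact I.lower hxy hyz |
        exact hxy.trans hyz
  le_antisymm x y := by
    rcases x with _ | a <;> rcases y with _ | b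
    · exact fun _ _ => rfl
    · exact fun h _ => h.elim
    · exact fun _ h => h.elim
    · exact fun hab hba => congrArg some (le_antisymm hab hba)

instance [Finite α] : Finite (WithTopOver I) := inferInstanceAs (Finite (Option α))

def apex : WithTopOver I := (none : Option α)

variable (I) in
def embedding : α ↪o WithTopOver I where
  toFun a := (some a : Option α)
  inj' := Option.some_injective α
  map_rel_iff' := Iff.rfl

lemma embedding_le_apex {a : α} : embedding I a ≤ apex ↔ a ∈ I := Iff.rfl

lemma isMax_apex : IsMax (apex : WithTopOver I) := by
  rintro (_ | a) h
  exacts [le_rfl, h.elim]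

lemma range_embedding : Set.range (embedding I) = {z | z ≠ apex} := by
  ext z
  rcases z with _ | a
  · exact ⟨fun ⟨a, ha⟩ => (Option.some_ne_none a ha).elim, fun h => absurd rfl h⟩
  · exact ⟨fun _ => Option.some_ne_none a, fun _ => ⟨a, rfl⟩⟩

end WithTopOver

end WithTopOver

section Criterion

variable [PartialOrder α] {n : ℕ} {I : Set α}

lemma isCoatomTopDeletion_withTopOver (I : LowerSet α) :
    IsCoatomTopDeletion ((WithTopOver.embedding I).trans WithTop.coeOrderHom)
      ((WithTopOver.apex : WithTopOver I) : WithTop (WithTopOver I)) ⊤ := by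
  refine ⟨?_, fun _ => le_top, WithTop.coe_covBy_top.mpr WithTopOver.isMax_apex⟩
  ext z
  induction z using WithTop.recTopCoe with
  | top => simp
  | coe z => simp [Set.range_comp, WithTopOver.range_embedding]

lemma NearEulerianCrit.isNearEulerianOfRank [Finite α] (hα : IsLowerEulerianOfRank α n)
    (hn : 0 < n) (hcrit : NearEulerianCrit α n I) : IsNearEulerianOfRank α n := by
  let I' : LowerSet α := ⟨I, hcrit.1⟩
  have hD := isCoatomTopDeletion_withTopOver I'
  set f : α ↪o WithTop (WithTopOver I') :=
    (WithTopOver.embedding I').trans WithTop.coeOrderHom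
  set q := ((WithTopOver.apex : WithTopOver I') : WithTop (WithTopOver I'))
  have hI : {a | f a ≤ q} = I :=
    Set.ext fun a => WithTop.coe_le_coe.trans WithTopOver.embedding_le_apex
  rw [← hI] at hcrit
  obtain ⟨-, hIgr, hsum, hsum'⟩ := hcrit
  obtain ⟨⟨b, hb⟩, hαgr, hαbal⟩ := hα
  have hQgr := hD.isGradedOfRank hn hαgr hIgr
  obtain ⟨u, hu⟩ := exists_isMaxChainIn {a | f a ≤ q}
  have hq : rho q = n := by
    have := hD.card_eq_rho_of_isMaxChainIn hQgr hu
    have := hIgr.card_eq hu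
    omega
  obtain ⟨c, hc⟩ : u.Nonempty := Finset.card_pos.mp (by rw [hIgr.card_eq hu]; omega)
  have hbot : ∀ z, f b ≤ z := fun z => by
    rcases hD.eq_or_exists z with rfl | rfl | ⟨a, rfl⟩
    · exact (f.monotone (hb c)).trans (hu.subset hc)
    · exact le_top
    · exact f.monotone (hb a)
  refine isNearEulerianOfRank_iff.mpr ⟨_, _, inferInstance, f, q, ⊤, hD,
    ⟨⟨f b, hbot⟩, ⟨⊤, fun _ => le_top⟩, hQgr, ?_⟩, hq⟩
  exact (hD.balancedIntervalsIn_univ_iff hq (hD.rho_right hQgr)).mpr ⟨hαbal, hsum, hsum'⟩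

end Criterion

section Boundary

variable [PartialOrder α] [Finite α] {n : ℕ} {x : α} {I : Set α}

lemma signSum_Ici_of_rho_add_one (hgr : IsGradedOfRank α n) (hx : rho x + 1 = n) :
    signSum (Set.Ici x) = (-1 : ℤ) ^ rho x + {z | x ⋖ z}.ncard * (-1 : ℤ) ^ n := by
  have hIci : Set.Ici x = insert x {z | x ⋖ z} := by
    ext z
    refine ⟨fun hxz => ?_, ?_⟩
    · rcases eq_or_lt_of_le hxz with rfl | hlt
      · exact Set.mem_insert _ _
      · have := hgr.rho_le isLowerSet_univ (Set.mem_univ z)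
        exact Or.inr (hgr.covBy_of_rho_le isLowerSet_univ (Set.mem_univ z) hlt (by omega))
    · rintro (rfl | hxz)
      exacts [le_rfl, hxz.le]
  have hcover : ∀ z ∈ {z | x ⋖ z}, (-1 : ℤ) ^ rho z = (-1) ^ n := fun z hz => by
    have := hgr.rho_lt_rho isLowerSet_univ (Set.mem_univ z) hz.lt
    have := hgr.rho_le isLowerSet_univ (Set.mem_univ z)
    rw [show rho z = n by omega]
  have hxx : x ∉ {z | x ⋖ z} := fun h => lt_irrefl x (CovBy.lt h)
  rw [signSum, hIci, finsum_mem_insert _ hxx (Set.toFinite _),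
    finsum_mem_congr rfl hcover, finsum_mem_const_eq_ncard_mul]

lemma NearEulerianCrit.ncard_covBy_eq_one_iff (hgr : IsGradedOfRank α n)
    (hcrit : NearEulerianCrit α n I) (hx : rho x + 1 = n) :
    {z | x ⋖ z}.ncard = 1 ↔ x ∈ I := by
  have hsum := signSum_Ici_of_rho_add_one hgr hx
  rw [← hx, pow_succ] at hsum
  have hne : (-1 : ℤ) ^ rho x ≠ 0 := pow_ne_zero _ (by norm_num)
  by_cases hxI : x ∈ I
  · have h0 : signSum (Set.Ici x) = 0 := (hcrit.2.2.1 x hxI).2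
    have : ({z | x ⋖ z}.ncard : ℤ) = 1 :=
      mul_right_cancel₀ hne (by linear_combination hsum - h0)
    simp only [hxI, iff_true]
    exact_mod_cast this
  · have h0 : signSum (Set.Ici x) = (-1) ^ n := hcrit.2.2.2 x hxI
    rw [← hx, pow_succ] at h0
    have : ({z | x ⋖ z}.ncard : ℤ) = 2 :=
      mul_right_cancel₀ hne (by linear_combination hsum - h0)
    simp only [hxI, iff_false]
    omega

lemma NearEulerianCrit.eq_boundary (hgr : IsGradedOfRank α n) (hn : 0 < n)
    (hcrit : NearEulerianCrit α n I) : I = boundary α n := by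
  ext y
  simp only [boundary, boundaryIn, Set.mem_univ, true_and, Set.mem_ofPred_eq]
  constructor
  · intro hy
    obtain ⟨m, hym, hm⟩ := Finite.exists_le_maximal (p := (· ∈ I)) hy
    have hrho : rho m = n - 1 := hcrit.2.1.rho_eq_of_maximal hcrit.1 hm
    exact ⟨m, hrho, (hcrit.ncard_covBy_eq_one_iff hgr (by omega)).mpr hm.prop, hym⟩
  · rintro ⟨x, hx, hcov, hyx⟩
    exact hcrit.1 hyx ((hcrit.ncard_covBy_eq_one_iff hgr (by omega)).mp hcov)

end Boundary

theorem nearEulerian_criterion_general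
    (α : Type) [PartialOrder α] [Finite α] (n : ℕ)
    (h : IsLowerEulerianOfRank α n) :
    (IsNearEulerianOfRank α n ↔ 0 < n ∧ ∃ I : Set α, NearEulerianCrit α n I) ∧
    (∀ I : Set α, 0 < n → NearEulerianCrit α n I → I = boundary α n) := by
  refine ⟨⟨fun hP => ?_, fun ⟨hn, I, hI⟩ => hI.isNearEulerianOfRank h hn⟩,
    fun I hn hI => hI.eq_boundary h.2.1 hn⟩
  obtain ⟨Q, _, _, f, q, t, hD, hQ, hq⟩ := isNearEulerianOfRank_iff.mp hP
  have : Nonempty α := h.1.nonempty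
  exact (hD.nearEulerianCrit hQ hq).imp_right fun hI => ⟨_, hI⟩

/-- Near-Eulerian criterion for posets.  A lower Eulerian poset `P` of
rank `n` is near-Eulerian if and only if `n > 0` and there is a graded lower order ideal
`I` of rank `n - 1` satisfying the alternating-sum conditions; moreover any such `I`
equals the boundary `∂P`. -/
theorem nearEulerian_criterion
    (α : Type) [PartialOrder α] [Finite α] [OrderBot α] (n : ℕ)
    (h : IsLowerEulerianOfRank α n) :
    (IsNearEulerianOfRank α n ↔ 0 < n ∧ ∃ I : Set α, NearEulerianCrit α n I) ∧
    (∀ I : Set α, 0 < n → NearEulerianCrit α n I → I = boundary α n) :=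
  nearEulerian_criterion_general α n h

end CDIndex
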